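/- arXiv:2306.10871 — 3 statements merged into one kernel-verified Lean document; each statement's English description precedes it below -/
import Mathlib

section
/- Let P be a finite index set and (A_p)_{p∈P} n×n real matrices with P = 𝔰 ∪ 𝔲. Let E ⊆ P × P be a set of admissible switches such that the subrelation E_u = {(p,q) ∈ E : p ∈ 𝔲} contains no directed cycle, and let 𝕄 be a nonempty compact set of n×n real matrices not containing the zero matrix. Then there exist τ* ≥ 0, η* > 0, a nonempty subset 𝓘 ⊆ 𝕄, and a constant C > 0 such that for every j ≥ 0, every sequence p_0, …, p_j ∈ P with (p_{k−1},p_k) ∈ E for 1 ≤ k ≤ j, all durations d_1, …, d_j > 0 with d_k ≥ τ* whenever p_{k−1} ∈ 𝔰 and d_k ≤ η* whenever p_{k−1} ∈ 𝔲, every choice of impulses M_1, …, M_j ∈ 𝓘, and every s ≥ 0 with s ≤ η* whenever p_j ∈ 𝔲, one has ‖exp(s·A_{p_j})·Ψ_j‖ ≤ C; that is, the impulsive switched system governed by the graph E with impulses from 𝓘 is stable under arbitrary impulses for all E-admissible switching signals with dwell time τ* and flee time η*. -/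
open Matrix NormedSpace
open scoped Matrix.Norms.L2Operator

noncomputable section

/-- A real square matrix is Hurwitz stable if every eigenvalue of it, regarded as a
complex matrix, has negative real part. -/
def HurwitzStable {n : ℕ} (A : Matrix (Fin n) (Fin n) ℝ) : Prop :=
  ∀ μ ∈ spectrum ℂ (A.map (Complex.ofReal ·)), μ.re < 0

/-- A real square matrix is unstable if some eigenvalue of it, regarded as a
complex matrix, has positive real part. -/
def HasUnstableEigenvalue {n : ℕ} (A : Matrix (Fin n) (Fin n) ℝ) : Prop :=
  ∃ μ ∈ spectrum ℂ (A.map (Complex.ofReal ·)), 0 < μ.re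

/-- The transition matrix `Φ_j` of the reset switched system: for the switching sequence
`p 0, p 1, …`, durations `d 1, d 2, …` and reset matrices `R`, it is
`Φ_j = R_{(p_{j−1},p_j)} exp(d_j A_{p_{j−1}}) ⋯ R_{(p_0,p_1)} exp(d_1 A_{p_0})`, `Φ_0 = 1`. -/
def resetTransition {n : ℕ} {P : Type*} (A : P → Matrix (Fin n) (Fin n) ℝ)
    (R : P → P → Matrix (Fin n) (Fin n) ℝ) (p : ℕ → P) (d : ℕ → ℝ) :
    ℕ → Matrix (Fin n) (Fin n) ℝ
  | 0 => 1
  | j + 1 => R (p j) (p (j + 1)) * exp (d (j + 1) • A (p j)) * resetTransition A R p d j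

/-- The transition matrix `Ψ_j` of the impulsive switched system: for the switching sequence
`p 0, p 1, …`, durations `d 1, d 2, …` and impulse matrices `M 1, M 2, …`, it is
`Ψ_j = M_j exp(d_j A_{p_{j−1}}) ⋯ M_1 exp(d_1 A_{p_0})`, `Ψ_0 = 1`. -/
def impulsiveTransition {n : ℕ} {P : Type*} (A : P → Matrix (Fin n) (Fin n) ℝ)
    (M : ℕ → Matrix (Fin n) (Fin n) ℝ) (p : ℕ → P) (d : ℕ → ℝ) :
    ℕ → Matrix (Fin n) (Fin n) ℝ
  | 0 => 1
  | j + 1 => M (j + 1) * exp (d (j + 1) • A (p j)) * impulsiveTransition A M p d j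

/-- A relation `E` contains no directed cycle: there is no edge `a → b` together with a
directed path from `b` back to `a`. -/
def NoDirectedCycle {P : Type*} (E : P → P → Prop) : Prop :=
  ∀ a b, E a b → ¬ Relation.ReflTransGen E b a

/-!
Along a Hurwitz stable mode `exp (t • A) → 0`: by Gelfand's formula the powers of `exp A`
decay, because every eigenvalue of `exp A` is `exp μ` for an eigenvalue `μ` of `A`. So after a
long enough dwell time a stable step, impulse included, contracts by any prescribed factor,
while unstable steps of length at most `η*` and the impulses from the bounded set `𝕄` expand by
at most a fixed factor `B`. As the unstable part of `E` is acyclic, an admissible switching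
sequence passes through fewer than `|P|` unstable modes in a row, so the contraction factor
`B ^ (-|P|)` keeps every transition matrix bounded by `B ^ |P|`.
-/

open Filter Topology
open scoped ENNReal

theorem Matrix.exp_mulVec_of_mulVec_eq_smul {m : Type*} [Fintype m] [DecidableEq m]
    {B : Matrix m m ℂ} {μ : ℂ} {v : m → ℂ} (hv : B *ᵥ v = μ • v) :
    exp B *ᵥ v = Complex.exp μ • v := by
  have hpow (k : ℕ) : (B ^ k) *ᵥ v = μ ^ k • v := by
    induction k with
    | zero => simp
    | succ k ih => rw [pow_succ, ← mulVec_mulVec, hv, mulVec_smul, ih, smul_smul, pow_succ']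
  have hB := (exp_series_hasSum_exp' (𝕂 := ℂ) B).map (mulVec.addMonoidHomLeft v)
    (continuous_id.matrix_mulVec continuous_const)
  have hμ := (exp_series_hasSum_exp' (𝕂 := ℂ) μ).smul_const v
  refine hB.unique ?_
  rw [Complex.exp_eq_exp_ℂ]
  convert hμ using 2 with k
  simp [mulVec.addMonoidHomLeft, smul_mulVec, hpow, smul_smul]

theorem Matrix.spectrum_exp_subset {m : Type*} [Fintype m] [DecidableEq m] (B : Matrix m m ℂ) :
    spectrum ℂ (exp B) ⊆ Complex.exp '' spectrum ℂ B := by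
  intro ν hν
  rw [← Matrix.spectrum_toLin', ← Module.End.hasEigenvalue_iff_mem_spectrum] at hν
  have hcomm : Commute (toLin' (exp B)) (toLin' B) :=
    ((Commute.refl B).exp_left).map (toLinAlgEquiv' (R := ℂ) (n := m))
  have hW := Module.End.mapsTo_genEigenspace_of_comm hcomm ν 1
  have : Nontrivial (Module.End.eigenspace (toLin' (exp B)) ν) :=
    Submodule.nontrivial_iff_ne_bot.mpr hν
  obtain ⟨μ, hμ⟩ := Module.End.exists_eigenvalue ((toLin' B).restrict hW)
  obtain ⟨⟨v, hvW⟩, hv, hv0⟩ := hμ.exists_hasEigenvector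
  have hBv : B *ᵥ v = μ • v :=
    congrArg Subtype.val (Module.End.mem_eigenspace_iff.mp hv)
  have hv0 : v ≠ 0 := by simpa using hv0
  have hexp : Complex.exp μ • v = ν • v := by
    rw [← Matrix.exp_mulVec_of_mulVec_eq_smul hBv]
    simpa using Module.End.mem_eigenspace_iff.mp hvW
  refine ⟨μ, ?_, smul_left_injective ℂ hv0 hexp⟩
  rw [← Matrix.spectrum_toLin', ← Module.End.hasEigenvalue_iff_mem_spectrum]
  exact Module.End.hasEigenvalue_of_hasEigenvector ⟨by simpa using hBv, hv0⟩

theorem Matrix.spectralRadius_exp_lt_one {m : Type*} [Fintype m] [DecidableEq m]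
    {B : Matrix m m ℂ} (hB : ∀ μ ∈ spectrum ℂ B, μ.re < 0) : spectralRadius ℂ (exp B) < 1 := by
  rcases (spectrum ℂ (exp B)).eq_empty_or_nonempty with h | h
  · simp [spectralRadius, h]
  · rw [← ENNReal.coe_one]
    refine spectrum.spectralRadius_lt_of_forall_lt_of_nonempty h fun ν hν => ?_
    obtain ⟨μ, hμ, rfl⟩ := B.spectrum_exp_subset hν
    rw [← NNReal.coe_lt_coe, coe_nnnorm, Complex.norm_exp, NNReal.coe_one, Real.exp_lt_one_iff]
    exact hB μ hμ

theorem tendsto_pow_atTop_nhds_zero_of_spectralRadius_lt_one {A : Type*} [NormedRing A]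
    [NormedAlgebra ℂ A] [CompleteSpace A] {a : A} (ha : spectralRadius ℂ a < 1) :
    Tendsto (a ^ ·) atTop (𝓝 0) := by
  obtain ⟨r, har, hr1⟩ := ENNReal.lt_iff_exists_nnreal_btwn.mp ha
  have hr1 : (r : ℝ) < 1 := mod_cast hr1
  have hroot : ∀ᶠ k : ℕ in atTop, (‖a ^ k‖₊ : ℝ≥0∞) ^ (1 / (k : ℝ)) < r :=
    (spectrum.pow_nnnorm_pow_one_div_tendsto_nhds_spectralRadius a).eventually_lt_const har
  refine squeeze_zero_norm' ?_ (tendsto_pow_atTop_nhds_zero_of_lt_one r.2 hr1)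
  filter_upwards [hroot, eventually_gt_atTop 0] with k hk hk0
  have hk' : (0 : ℝ) < k := mod_cast hk0
  have := ENNReal.rpow_le_rpow hk.le hk'.le
  rw [← ENNReal.rpow_mul, one_div_mul_cancel hk'.ne', ENNReal.rpow_one,
    ENNReal.rpow_natCast] at this
  exact_mod_cast this

theorem tendsto_exp_smul_atTop_nhds_zero {A : Type*} [NormedRing A] [NormedAlgebra ℂ A]
    [CompleteSpace A] {a : A} (ha : spectralRadius ℂ (exp a) < 1) :
    Tendsto (fun t : ℝ => exp ((t : ℂ) • a)) atTop (𝓝 0) := by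
  let : NormedAlgebra ℚ A := NormedAlgebra.restrictScalars ℚ ℂ A
  have hcont : Continuous fun s : ℝ => exp ((s : ℂ) • a) := by fun_prop
  obtain ⟨K, hK⟩ := (isCompact_Icc (a := (0 : ℝ)) (b := 1)).exists_bound_of_continuousOn
    hcont.norm.continuousOn
  have hsplit (t : ℝ) : exp ((t : ℂ) • a) = exp (((t - ⌊t⌋₊ : ℝ) : ℂ) • a) * exp a ^ ⌊t⌋₊ := by
    rw [← NormedSpace.exp_nsmul,
      ← NormedSpace.exp_add_of_commute (((Commute.refl a).smul_left _).smul_right _),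
      ← Nat.cast_smul_eq_nsmul ℂ, ← add_smul]
    push_cast
    rw [sub_add_cancel]
  have hpow := ((tendsto_pow_atTop_nhds_zero_of_spectralRadius_lt_one ha).comp
    (tendsto_nat_floor_atTop (α := ℝ))).norm.const_mul K
  rw [norm_zero, mul_zero] at hpow
  refine squeeze_zero_norm' ?_ hpow
  filter_upwards [eventually_ge_atTop 0] with t ht
  rw [hsplit t]
  refine (norm_mul_le _ _).trans (mul_le_mul_of_nonneg_right ?_ (norm_nonneg _))
  simpa using hK _ ⟨sub_nonneg.2 (Nat.floor_le ht), by linarith [Nat.lt_floor_add_one t]⟩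

theorem Matrix.exp_map_ofReal {m : Type*} [Fintype m] [DecidableEq m] (X : Matrix m m ℝ) :
    exp (X.map Complex.ofReal) = (exp X).map Complex.ofReal :=
  let : NormedAlgebra ℚ (Matrix m m ℝ) := NormedAlgebra.restrictScalars ℚ ℝ _
  (NormedSpace.map_exp Complex.ofRealHom.mapMatrix
    (continuous_id.matrix_map Complex.continuous_ofReal) X).symm

theorem HurwitzStable.tendsto_exp_smul_atTop_nhds_zero {n : ℕ}
    {A : Matrix (Fin n) (Fin n) ℝ} (hA : HurwitzStable A) :
    Tendsto (fun t : ℝ => exp (t • A)) atTop (𝓝 0) := by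
  have hre : Continuous fun X : Matrix (Fin n) (Fin n) ℂ => X.map Complex.re :=
    continuous_id.matrix_map Complex.continuous_re
  have h := (hre.tendsto 0).comp
    (_root_.tendsto_exp_smul_atTop_nhds_zero (Matrix.spectralRadius_exp_lt_one hA))
  rw [Matrix.map_zero _ Complex.zero_re] at h
  refine h.congr fun t => ?_
  have hsmul : (t : ℂ) • A.map (Complex.ofReal ·) = (t • A).map Complex.ofReal := by
    ext; simp
  simp only [Function.comp_apply, hsmul, Matrix.exp_map_ofReal, Matrix.map_map]
  ext; simp

theorem Matrix.l2_opNorm_one_le {m 𝕜 : Type*} [RCLike 𝕜] [Fintype m] [DecidableEq m] :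
    ‖(1 : Matrix m m 𝕜)‖ ≤ 1 := by
  rw [Matrix.cstar_norm_def, map_one]
  exact ContinuousLinearMap.norm_id_le

section UniformBounds

variable {n : ℕ} {P : Type*} [Finite P] (A : P → Matrix (Fin n) (Fin n) ℝ)

theorem exists_forall_hurwitzStable_norm_exp_smul_le {ε : ℝ} (hε : 0 < ε) :
    ∃ τ : ℝ, 0 ≤ τ ∧ ∀ q, HurwitzStable (A q) → ∀ t, τ ≤ t → ‖exp (t • A q)‖ ≤ ε := by
  have hdecay : ∀ᶠ t in atTop, ∀ q, HurwitzStable (A q) → ‖exp (t • A q)‖ ≤ ε :=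
    eventually_all.2 fun q => eventually_imp_distrib_left.2 fun hq =>
      (hq.tendsto_exp_smul_atTop_nhds_zero.norm.eventually_le_const (by simpa using hε))
  obtain ⟨τ, hτ⟩ := eventually_atTop.1 (hdecay.and (eventually_ge_atTop 0))
  exact ⟨τ, (hτ τ le_rfl).2, fun q hq t ht => (hτ t ht).1 q hq⟩

theorem exists_forall_norm_exp_smul_le
    (hP : ∀ q, HurwitzStable (A q) ∨ HasUnstableEigenvalue (A q)) (η : ℝ) :
    ∃ K > 0, ∀ q s, 0 ≤ s → (HasUnstableEigenvalue (A q) → s ≤ η) →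
      ‖exp (s • A q)‖ ≤ K := by
  let : NormedAlgebra ℚ (Matrix (Fin n) (Fin n) ℝ) := NormedAlgebra.restrictScalars ℚ ℝ _
  obtain ⟨τ, -, hτ⟩ := exists_forall_hurwitzStable_norm_exp_smul_le A one_pos
  set T := max τ η
  have hcpt : IsCompact (⋃ q, (fun s : ℝ => exp (s • A q)) '' Set.Icc 0 T) :=
    isCompact_iUnion fun q => isCompact_Icc.image (by fun_prop)
  obtain ⟨K, hK0, hK⟩ := hcpt.isBounded.exists_pos_norm_le
  refine ⟨max K 1, by positivity, fun q s hs hsη => ?_⟩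
  by_cases hsT : s ≤ T
  · exact (hK _ (Set.mem_iUnion.2 ⟨q, s, ⟨hs, hsT⟩, rfl⟩)).trans (le_max_left _ _)
  · have hq : HurwitzStable (A q) :=
      (hP q).resolve_right fun hu => hsT ((hsη hu).trans (le_max_right _ _))
    exact (hτ q hq s ((le_max_left _ _).trans (not_le.1 hsT).le)).trans (le_max_right _ _)

end UniformBounds

def trailingRun (U : ℕ → Prop) [DecidablePred U] : ℕ → ℕ
  | 0 => 0
  | i + 1 => if U i then trailingRun U i + 1 else 0

section TrailingRun

variable {U : ℕ → Prop} [DecidablePred U]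

theorem trailingRun_le (i : ℕ) : trailingRun U i ≤ i := by
  induction i with
  | zero => rfl
  | succ i ih =>
    rw [trailingRun]
    split_ifs <;> omega

theorem holds_of_lt_trailingRun {i k : ℕ} (hk : k < trailingRun U i) :
    U (i - trailingRun U i + k) := by
  induction i with
  | zero => exact absurd hk (Nat.not_lt_zero k)
  | succ i ih =>
    rw [trailingRun] at hk ⊢
    split_ifs at hk ⊢ with hU
    · rcases Nat.lt_succ_iff_lt_or_eq.1 hk with hk | rfl
      · simpa [Nat.add_sub_add_right] using ih hk
      · simpa [Nat.sub_add_cancel (trailingRun_le i)] using hU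
    · exact absurd hk (Nat.not_lt_zero k)

theorem norm_le_pow_of_trailingRun_le {R : Type*} [NormedRing R] {Ψ F : ℕ → R} {B : ℝ}
    {N j : ℕ} (hΨ0 : ‖Ψ 0‖ ≤ 1) (hΨ : ∀ i, Ψ (i + 1) = F i * Ψ i) (hB : 1 ≤ B)
    (hU : ∀ i < j, U i → ‖F i‖ ≤ B) (hS : ∀ i < j, ¬U i → ‖F i‖ ≤ (B ^ N)⁻¹)
    (hrun : ∀ i ≤ j, trailingRun U i ≤ N) : ‖Ψ j‖ ≤ B ^ N := by
  have hBN : 0 < B ^ N := by positivity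
  suffices h : ∀ i ≤ j, ‖Ψ i‖ ≤ B ^ trailingRun U i from
    (h j le_rfl).trans (pow_le_pow_right₀ hB (hrun j le_rfl))
  intro i
  induction i with
  | zero => simpa [trailingRun] using hΨ0
  | succ i ih =>
    intro hi
    have ih := ih (by omega)
    rw [hΨ, trailingRun]
    refine (norm_mul_le _ _).trans ?_
    split_ifs with hUi
    · rw [pow_succ']
      exact mul_le_mul (hU i hi hUi) ih (norm_nonneg _) (by linarith)
    · calc ‖F i‖ * ‖Ψ i‖ ≤ (B ^ N)⁻¹ * B ^ N :=
            mul_le_mul (hS i hi hUi) (ih.trans (pow_le_pow_right₀ hB (hrun i (by omega))))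
              (norm_nonneg _) (inv_nonneg.2 hBN.le)
        _ = B ^ 0 := by rw [inv_mul_cancel₀ hBN.ne', pow_zero]

end TrailingRun

theorem NoDirectedCycle.lt_card_of_chain {P : Type*} [Fintype P] {R : P → P → Prop}
    (hR : NoDirectedCycle R) {x : ℕ → P} {m : ℕ} (hx : ∀ k < m, R (x k) (x (k + 1))) :
    m < Fintype.card P := by
  have hpath : ∀ a b, a ≤ b → b ≤ m → Relation.ReflTransGen R (x a) (x b) := by
    intro a b hab hbm
    induction b, hab using Nat.le_induction with
    | base => exact .refl
    | succ b _ ih => exact (ih (by omega)).tail (hx b (by omega))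
  have hne : ∀ a b, a < b → b ≤ m → x a ≠ x b := fun a b hab hbm hxab =>
    hR (x a) (x (a + 1)) (hx a (by omega)) (hxab ▸ hpath (a + 1) b hab hbm)
  have hinj : Function.Injective fun i : Fin (m + 1) => x i := by
    intro a b hab
    by_contra h
    rcases Fin.lt_or_lt_of_ne h with h | h
    · exact hne a b h (by omega) hab
    · exact hne b a h (by omega) hab.symm
  simpa using Fintype.card_le_of_injective _ hinj

theorem NoDirectedCycle.trailingRun_lt_card {P : Type*} [Fintype P] {E : P → P → Prop}
    {U : P → Prop} [DecidablePred U] (hE : NoDirectedCycle fun a b => E a b ∧ U a)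
    {p : ℕ → P} {j : ℕ} (hp : ∀ k < j, E (p k) (p (k + 1))) {i : ℕ} (hi : i ≤ j) :
    trailingRun (fun k => U (p k)) i < Fintype.card P := by
  have hrun := trailingRun_le (U := fun k => U (p k)) i
  refine hE.lt_card_of_chain (x := fun k => p (i - trailingRun (fun k => U (p k)) i + k))
    fun k hk => ⟨hp _ (by omega), holds_of_lt_trailingRun hk⟩

theorem exists_time_constraints_and_impulses_from_compact_general {n : ℕ} {P : Type*} [Fintype P]
    (A : P → Matrix (Fin n) (Fin n) ℝ)
    (hP : ∀ p, HurwitzStable (A p) ∨ HasUnstableEigenvalue (A p))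
    (E : P → P → Prop)
    (hEu : NoDirectedCycle (fun p q => E p q ∧ HasUnstableEigenvalue (A p)))
    (𝕄 : Set (Matrix (Fin n) (Fin n) ℝ)) (h𝕄ne : 𝕄.Nonempty) (h𝕄 : IsCompact 𝕄) :
    ∃ τs : ℝ, 0 ≤ τs ∧ ∃ ηs : ℝ, 0 < ηs ∧
      ∃ 𝓘 : Set (Matrix (Fin n) (Fin n) ℝ), 𝓘.Nonempty ∧ 𝓘 ⊆ 𝕄 ∧
      ∃ C > (0 : ℝ), ∀ (j : ℕ) (p : ℕ → P) (d : ℕ → ℝ) (M : ℕ → Matrix (Fin n) (Fin n) ℝ),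
        (∀ k, 1 ≤ k → k ≤ j → E (p (k - 1)) (p k)) →
        (∀ k, 1 ≤ k → k ≤ j → 0 < d k) →
        (∀ k, 1 ≤ k → k ≤ j → HurwitzStable (A (p (k - 1))) → τs ≤ d k) →
        (∀ k, 1 ≤ k → k ≤ j → HasUnstableEigenvalue (A (p (k - 1))) → d k ≤ ηs) →
        (∀ k, 1 ≤ k → k ≤ j → M k ∈ 𝓘) →
        ∀ s : ℝ, 0 ≤ s → (HasUnstableEigenvalue (A (p j)) → s ≤ ηs) →
          ‖exp (s • A (p j)) * impulsiveTransition A M p d j‖ ≤ C := by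
  classical
  obtain ⟨m, hm0, hm⟩ := h𝕄.isBounded.exists_pos_norm_le
  obtain ⟨K, hK0, hK⟩ := exists_forall_norm_exp_smul_le A hP 1
  set B := max 1 (m * K)
  set N := Fintype.card P
  obtain ⟨τs, hτs0, hτs⟩ :=
    exists_forall_hurwitzStable_norm_exp_smul_le A (ε := m⁻¹ * (B ^ N)⁻¹) (by positivity)
  refine ⟨τs, hτs0, 1, one_pos, 𝕄, h𝕄ne, subset_rfl, K * B ^ N, by positivity, ?_⟩
  intro j p d M hE hd hτ hη hM s hs hsη
  have hstep : ∀ i < j, ∀ c, ‖exp (d (i + 1) • A (p i))‖ ≤ c →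
      ‖M (i + 1) * exp (d (i + 1) • A (p i))‖ ≤ m * c := fun i hi c hc =>
    (norm_mul_le _ _).trans (mul_le_mul (hm _ (hM _ (by omega) hi)) hc (norm_nonneg _) hm0.le)
  have hΨ : ‖impulsiveTransition A M p d j‖ ≤ B ^ N := by
    refine norm_le_pow_of_trailingRun_le (U := fun i => HasUnstableEigenvalue (A (p i)))
      Matrix.l2_opNorm_one_le (fun _ => rfl) (le_max_left _ _)
      (fun i hi hu => (hstep i hi K (hK _ _ (hd _ (by omega) hi).le
        fun _ => hη _ (by omega) hi hu)).trans (le_max_right _ _))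
      (fun i hi hu => ?_)
      fun i hi => (hEu.trailingRun_lt_card (fun k hk => hE (k + 1) (by omega) hk) hi).le
    have hstab := (hP (p i)).resolve_right hu
    refine (hstep i hi _ (hτs _ hstab _ (hτ _ (by omega) hi hstab))).trans_eq ?_
    exact mul_inv_cancel_left₀ hm0.ne' _
  calc ‖exp (s • A (p j)) * impulsiveTransition A M p d j‖
      ≤ ‖exp (s • A (p j))‖ * ‖impulsiveTransition A M p d j‖ := norm_mul_le _ _
    _ ≤ K * B ^ N := mul_le_mul (hK _ _ hs hsη) hΨ (norm_nonneg _) hK0.le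

/-- Given a switching graph `E` whose unstable part is acyclic and a nonempty compact set
`𝕄` of nonzero matrices, there are a dwell time `τ* ≥ 0`, a flee time `η* > 0` and a
nonempty set `𝓘 ⊆ 𝕄` of impulses making the impulsive switched system governed by `E`
stable under arbitrary impulses for all `E`-admissible switching signals with dwell time
`τ*` and flee time `η*`. -/
theorem exists_time_constraints_and_impulses_from_compact {n : ℕ} {P : Type*} [Fintype P]
    (A : P → Matrix (Fin n) (Fin n) ℝ)
    (hP : ∀ p, HurwitzStable (A p) ∨ HasUnstableEigenvalue (A p))
    (E : P → P → Prop)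
    (hEu : NoDirectedCycle (fun p q => E p q ∧ HasUnstableEigenvalue (A p)))
    (𝕄 : Set (Matrix (Fin n) (Fin n) ℝ)) (h𝕄ne : 𝕄.Nonempty) (h𝕄 : IsCompact 𝕄)
    (h𝕄0 : (0 : Matrix (Fin n) (Fin n) ℝ) ∉ 𝕄) :
    ∃ τs : ℝ, 0 ≤ τs ∧ ∃ ηs : ℝ, 0 < ηs ∧
      ∃ 𝓘 : Set (Matrix (Fin n) (Fin n) ℝ), 𝓘.Nonempty ∧ 𝓘 ⊆ 𝕄 ∧
      ∃ C > (0 : ℝ), ∀ (j : ℕ) (p : ℕ → P) (d : ℕ → ℝ) (M : ℕ → Matrix (Fin n) (Fin n) ℝ),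
        (∀ k, 1 ≤ k → k ≤ j → E (p (k - 1)) (p k)) →
        (∀ k, 1 ≤ k → k ≤ j → 0 < d k) →
        (∀ k, 1 ≤ k → k ≤ j → HurwitzStable (A (p (k - 1))) → τs ≤ d k) →
        (∀ k, 1 ≤ k → k ≤ j → HasUnstableEigenvalue (A (p (k - 1))) → d k ≤ ηs) →
        (∀ k, 1 ≤ k → k ≤ j → M k ∈ 𝓘) →
        ∀ s : ℝ, 0 ≤ s → (HasUnstableEigenvalue (A (p j)) → s ≤ ηs) →
          ‖exp (s • A (p j)) * impulsiveTransition A M p d j‖ ≤ C :=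
  exists_time_constraints_and_impulses_from_compact_general A hP E hEu 𝕄 h𝕄ne h𝕄
end
end

section
/- Let P be a finite index set and (A_p)_{p∈P} n×n real matrices with P = 𝔰 ∪ 𝔲. Suppose that for each p ∈ P there is a factorization A_p = P_p·J_p·P_p⁻¹ with P_p an invertible n×n complex matrix, together with constants c_p > 0 and rates λ_p > 0 for p ∈ 𝔰 and μ_p > 0 for p ∈ 𝔲 such that ‖exp(t·J_p)‖ ≤ c_p·e^{−λ_p·t} for all t ≥ 0 when p ∈ 𝔰 and ‖exp(t·J_p)‖ ≤ c_p·e^{μ_p·t} for all t ≥ 0 when p ∈ 𝔲. Let E ⊆ P × P be a set of admissible switches containing at least one pair with first coordinate in 𝔰 and at least one with first coordinate in 𝔲, and let 𝓘 be a nonempty compact set of n×n real matrices not containing the zero matrix. Define τ_I = max{ ln(c_p·‖P_q⁻¹·M·P_p‖)/λ_p : (p,q) ∈ E, p ∈ 𝔰, M ∈ 𝓘 } and η_I = −max{ ln(c_p·‖P_q⁻¹·M·P_p‖)/μ_p : (p,q) ∈ E, p ∈ 𝔲, M ∈ 𝓘 }. Then there exists C > 0 such that for every j ≥ 0, every sequence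 p_0, …, p_j ∈ P with (p_{k−1},p_k) ∈ E for 1 ≤ k ≤ j, all durations d_1, …, d_j > 0 with d_k ≥ τ_I whenever p_{k−1} ∈ 𝔰 and d_k ≤ η_I whenever p_{k−1} ∈ 𝔲, every choice of impulses M_1, …, M_j ∈ 𝓘, and every s ≥ 0 with s ≤ η_I whenever p_j ∈ 𝔲, one has ‖exp(s·A_{p_j})·Ψ_j‖ ≤ C; that is, the impulsive switched system governed by E is stable under arbitrary impulses for all E-admissible switching signals with dwell time τ_I and flee time η_I. -/
open Matrix NormedSpace
open scoped Matrix.Norms.L2Operator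

noncomputable section

/-!
In the coordinates `B_k = P_{p_k}⁻¹ Ψ_k P_{p_0}` the transition matrices evolve by
`B_{k+1} = (P_{p_{k+1}}⁻¹ M_{k+1} P_{p_k}) exp(d_{k+1} J_{p_k}) B_k`, and the dwell and flee
conditions say precisely that each factor has norm at most one: with `K` the conjugated impulse,
`c ‖K‖ ≤ e^{λ τ_I} ≤ e^{λ d}` after a stable mode and `c ‖K‖ e^{μ d} ≤ c ‖K‖ e^{μ η_I} ≤ 1` after an
unstable one. Hence `‖B_j‖ ≤ 1`, and the remaining factors `P_{p_j}`, `exp(s J_{p_j})` (with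
`s ≤ η_I` in an unstable mode) and `P_{p_0}⁻¹` range over finitely many bounded families. The real
operator norm is dominated by that of the complexified matrix, so the bound transfers back.
-/

namespace Matrix

variable {m n : Type*} [Fintype n]

lemma map_ofReal_mul {l : Type*} (X : Matrix m n ℝ) (Y : Matrix n l ℝ) :
    (X * Y).map (Complex.ofReal ·) = X.map (Complex.ofReal ·) * Y.map (Complex.ofReal ·) :=
  Matrix.map_mul (f := Complex.ofRealHom)

variable [DecidableEq n]

lemma l2_opNorm_one_le_s9 : ‖(1 : Matrix n n ℂ)‖ ≤ 1 := by
  rw [cstar_norm_def, _root_.map_one]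
  exact ContinuousLinearMap.norm_id_le

lemma map_ofReal_exp (X : Matrix n n ℝ) :
    (exp X).map (Complex.ofReal ·) = exp (X.map (Complex.ofReal ·)) :=
  map_exp_of_mem_ball (𝕂 := ℝ) Complex.ofRealHom.mapMatrix
    (continuous_id.matrix_map Complex.continuous_ofReal) X
    ((expSeries_radius_eq_top ℝ (Matrix n n ℝ)).symm ▸ edist_lt_top _ _)

lemma map_ofReal_exp_smul_of_eq_conj {A : Matrix n n ℝ} {U J : Matrix n n ℂ} (hU : IsUnit U)
    (hA : A.map (Complex.ofReal ·) = U * J * U⁻¹) (t : ℝ) :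
    (exp (t • A)).map (Complex.ofReal ·) = U * exp ((t : ℂ) • J) * U⁻¹ := by
  have hsmul : (t • A).map (Complex.ofReal ·) = U * ((t : ℂ) • J) * U⁻¹ := by
    rw [mul_smul_comm, smul_mul_assoc, ← hA]
    ext i j
    simp
  rw [map_ofReal_exp, hsmul, exp_conj _ _ hU]

lemma norm_le_norm_map_ofReal [Fintype m] (X : Matrix m n ℝ) :
    ‖X‖ ≤ ‖X.map (Complex.ofReal ·)‖ := by
  rw [l2_opNorm_def]
  refine ContinuousLinearMap.opNorm_le_bound _ (norm_nonneg _) fun x => ?_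
  have hmulVec : X.map (Complex.ofReal ·) *ᵥ (fun i => (x i : ℂ)) =
      fun i => ((X *ᵥ x.ofLp) i : ℂ) := by
    ext i
    simp [mulVec, dotProduct]
  simpa [EuclideanSpace.equiv, hmulVec, EuclideanSpace.norm_eq, toLpLin_apply] using
    (X.map (Complex.ofReal ·)).l2_opNorm_mulVec (WithLp.toLp 2 fun i => (x i : ℂ))

end Matrix

lemma mul_mul_exp_le_one_of_log_mul_le {k c r : ℝ} (hk : 0 ≤ k) (hc : 0 < c)
    (h : Real.log (c * k) ≤ -r) : k * (c * Real.exp r) ≤ 1 := by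
  rcases hk.eq_or_lt with rfl | hk
  · simp -- `h` only concerns the junk value `log 0 = 0` here
  have hck : c * k ≤ Real.exp (-r) := (Real.log_le_iff_le_exp (by positivity)).mp h
  calc k * (c * Real.exp r) = c * k * Real.exp r := by ring
    _ ≤ Real.exp (-r) * Real.exp r := by gcongr
    _ = 1 := by rw [← Real.exp_add, neg_add_cancel, Real.exp_zero]

lemma mul_le_one_of_log_div_le_of_le {k e c lam τ d : ℝ} (hk : 0 ≤ k) (hc : 0 < c)
    (hlam : 0 < lam) (he : e ≤ c * Real.exp (-lam * d)) (hτ : Real.log (c * k) / lam ≤ τ)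
    (hd : τ ≤ d) : k * e ≤ 1 := by
  have hlog : Real.log (c * k) ≤ -(-lam * d) := by
    have := (div_le_iff₀ hlam).mp hτ
    nlinarith
  exact (mul_le_mul_of_nonneg_left he hk).trans (mul_mul_exp_le_one_of_log_mul_le hk hc hlog)

lemma mul_le_one_of_log_div_le_neg_of_le {k e c mu η d : ℝ} (hk : 0 ≤ k) (hc : 0 < c)
    (hmu : 0 < mu) (he : e ≤ c * Real.exp (mu * d)) (hη : Real.log (c * k) / mu ≤ -η)
    (hd : d ≤ η) : k * e ≤ 1 := by
  have hlog : Real.log (c * k) ≤ -(mu * d) := by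
    have := (div_le_iff₀ hmu).mp hη
    nlinarith
  exact (mul_le_mul_of_nonneg_left he hk).trans (mul_mul_exp_le_one_of_log_mul_le hk hc hlog)

lemma Finite.exists_pos_forall_le {ι : Type*} [Finite ι] (f : ι → ℝ) :
    ∃ C > 0, ∀ i, f i ≤ C := by
  obtain ⟨C, hC⟩ := Finite.exists_le f
  exact ⟨max C 1, by positivity, fun i => (hC i).trans (le_max_left _ _)⟩

section ImpulsiveTransition

variable {n : ℕ} {P : Type*} (A : P → Matrix (Fin n) (Fin n) ℝ)
  (Pm J : P → Matrix (Fin n) (Fin n) ℂ) (M : ℕ → Matrix (Fin n) (Fin n) ℝ) (p : ℕ → P) (d : ℕ → ℝ)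

def conjImpulsiveTransition (k : ℕ) : Matrix (Fin n) (Fin n) ℂ :=
  (Pm (p k))⁻¹ * (impulsiveTransition A M p d k).map (Complex.ofReal ·) * Pm (p 0)

variable {A Pm J}

lemma conjImpulsiveTransition_zero (hPm : IsUnit (Pm (p 0))) :
    conjImpulsiveTransition A Pm M p d 0 = 1 := by
  rw [conjImpulsiveTransition, impulsiveTransition, Matrix.map_one _ Complex.ofReal_zero
    Complex.ofReal_one, mul_one, Matrix.nonsing_inv_mul _ ((Matrix.isUnit_iff_isUnit_det _).mp hPm)]

lemma conjImpulsiveTransition_succ (hPm : ∀ q, IsUnit (Pm q))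
    (hfact : ∀ q, (A q).map (Complex.ofReal ·) = Pm q * J q * (Pm q)⁻¹) (k : ℕ) :
    conjImpulsiveTransition A Pm M p d (k + 1) =
      (Pm (p (k + 1)))⁻¹ * (M (k + 1)).map (Complex.ofReal ·) * Pm (p k) *
        exp ((d (k + 1) : ℂ) • J (p k)) * conjImpulsiveTransition A Pm M p d k := by
  rw [conjImpulsiveTransition, impulsiveTransition, Matrix.map_ofReal_mul, Matrix.map_ofReal_mul,
    Matrix.map_ofReal_exp_smul_of_eq_conj (hPm _) (hfact _), conjImpulsiveTransition]
  simp only [mul_assoc]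

lemma norm_conjImpulsiveTransition_le_one (hPm : ∀ q, IsUnit (Pm q))
    (hfact : ∀ q, (A q).map (Complex.ofReal ·) = Pm q * J q * (Pm q)⁻¹) {j : ℕ}
    (hstep : ∀ k < j, ‖(Pm (p (k + 1)))⁻¹ * (M (k + 1)).map (Complex.ofReal ·) * Pm (p k)‖ *
      ‖exp ((d (k + 1) : ℂ) • J (p k))‖ ≤ 1) :
    ‖conjImpulsiveTransition A Pm M p d j‖ ≤ 1 := by
  induction j with
  | zero => exact (conjImpulsiveTransition_zero M p d (hPm _)).symm ▸ Matrix.l2_opNorm_one_le_s9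
  | succ k ih =>
    rw [conjImpulsiveTransition_succ M p d hPm hfact]
    calc _ ≤ ‖(Pm (p (k + 1)))⁻¹ * (M (k + 1)).map (Complex.ofReal ·) * Pm (p k)‖ *
          ‖exp ((d (k + 1) : ℂ) • J (p k))‖ * ‖conjImpulsiveTransition A Pm M p d k‖ :=
          (norm_mul_le _ _).trans (by gcongr; exact norm_mul_le _ _)
      _ ≤ 1 * 1 := by
          gcongr
          exacts [hstep k k.lt_succ_self, ih fun i hi => hstep i (hi.trans k.lt_succ_self)]
      _ = 1 := one_mul 1

lemma map_ofReal_exp_smul_mul_impulsiveTransition (hPm : ∀ q, IsUnit (Pm q))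
    (hfact : ∀ q, (A q).map (Complex.ofReal ·) = Pm q * J q * (Pm q)⁻¹) (j : ℕ) (s : ℝ) :
    (exp (s • A (p j)) * impulsiveTransition A M p d j).map (Complex.ofReal ·) =
      Pm (p j) * exp ((s : ℂ) • J (p j)) * conjImpulsiveTransition A Pm M p d j *
        (Pm (p 0))⁻¹ := by
  rw [Matrix.map_ofReal_mul, Matrix.map_ofReal_exp_smul_of_eq_conj (hPm _) (hfact _),
    conjImpulsiveTransition]
  simp only [mul_assoc, Matrix.mul_nonsing_inv _ ((Matrix.isUnit_iff_isUnit_det _).mp (hPm _)),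
    mul_one]

end ImpulsiveTransition

lemma exists_forall_norm_exp_smul_le_s9 {n : ℕ} {P : Type*} [Finite P]
    {A : P → Matrix (Fin n) (Fin n) ℝ} {J : P → Matrix (Fin n) (Fin n) ℂ} {c lam mu : P → ℝ}
    (hP : ∀ p, HurwitzStable (A p) ∨ HasUnstableEigenvalue (A p)) (hc : ∀ p, 0 < c p)
    (hlam : ∀ p, HurwitzStable (A p) → 0 < lam p)
    (hmu : ∀ p, HasUnstableEigenvalue (A p) → 0 < mu p)
    (hJs : ∀ p, HurwitzStable (A p) → ∀ t : ℝ, 0 ≤ t →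
      ‖exp ((t : ℂ) • J p)‖ ≤ c p * Real.exp (-(lam p) * t))
    (hJu : ∀ p, HasUnstableEigenvalue (A p) → ∀ t : ℝ, 0 ≤ t →
      ‖exp ((t : ℂ) • J p)‖ ≤ c p * Real.exp (mu p * t))
    (η : ℝ) :
    ∃ C > 0, ∀ p, ∀ s : ℝ, 0 ≤ s → (HasUnstableEigenvalue (A p) → s ≤ η) →
      ‖exp ((s : ℂ) • J p)‖ ≤ C := by
  obtain ⟨C, hC0, hC⟩ := Finite.exists_pos_forall_le fun p => c p * Real.exp |mu p * η|
  refine ⟨C, hC0, fun p s hs hsη => le_trans ?_ (hC p)⟩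
  have hcp := (hc p).le
  rcases hP p with hst | hun
  · refine (hJs p hst s hs).trans ?_
    gcongr
    nlinarith [abs_nonneg (mu p * η), hlam p hst]
  · refine (hJu p hun s hs).trans ?_
    gcongr
    nlinarith [le_abs_self (mu p * η), hsη hun, hmu p hun]

theorem impulsive_system_stable_of_dwell_flee_general {n : ℕ} {P : Type*} [Fintype P]
    (A : P → Matrix (Fin n) (Fin n) ℝ)
    (hP : ∀ p, HurwitzStable (A p) ∨ HasUnstableEigenvalue (A p))
    (Pm J : P → Matrix (Fin n) (Fin n) ℂ)
    (hPm : ∀ p, IsUnit (Pm p))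
    (hfact : ∀ p, (A p).map (Complex.ofReal ·) = Pm p * J p * (Pm p)⁻¹)
    (c lam mu : P → ℝ) (hc : ∀ p, 0 < c p)
    (hlam : ∀ p, HurwitzStable (A p) → 0 < lam p)
    (hmu : ∀ p, HasUnstableEigenvalue (A p) → 0 < mu p)
    (hJs : ∀ p, HurwitzStable (A p) → ∀ t : ℝ, 0 ≤ t →
      ‖exp ((t : ℂ) • J p)‖ ≤ c p * Real.exp (-(lam p) * t))
    (hJu : ∀ p, HasUnstableEigenvalue (A p) → ∀ t : ℝ, 0 ≤ t →
      ‖exp ((t : ℂ) • J p)‖ ≤ c p * Real.exp (mu p * t))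
    (E : P → P → Prop)
    (𝓘 : Set (Matrix (Fin n) (Fin n) ℝ))
    (τI ηI : ℝ)
    (hτI_ub : ∀ p q, E p q → HurwitzStable (A p) → ∀ M ∈ 𝓘,
      Real.log (c p * ‖(Pm q)⁻¹ * M.map (Complex.ofReal ·) * Pm p‖) / lam p ≤ τI)
    (hηI_ub : ∀ p q, E p q → HasUnstableEigenvalue (A p) → ∀ M ∈ 𝓘,
      Real.log (c p * ‖(Pm q)⁻¹ * M.map (Complex.ofReal ·) * Pm p‖) / mu p ≤ -ηI) :
    ∃ C > (0 : ℝ), ∀ (j : ℕ) (p : ℕ → P) (d : ℕ → ℝ) (M : ℕ → Matrix (Fin n) (Fin n) ℝ),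
      (∀ k, 1 ≤ k → k ≤ j → E (p (k - 1)) (p k)) →
      (∀ k, 1 ≤ k → k ≤ j → 0 < d k) →
      (∀ k, 1 ≤ k → k ≤ j → HurwitzStable (A (p (k - 1))) → τI ≤ d k) →
      (∀ k, 1 ≤ k → k ≤ j → HasUnstableEigenvalue (A (p (k - 1))) → d k ≤ ηI) →
      (∀ k, 1 ≤ k → k ≤ j → M k ∈ 𝓘) →
      ∀ s : ℝ, 0 ≤ s → (HasUnstableEigenvalue (A (p j)) → s ≤ ηI) →
        ‖exp (s • A (p j)) * impulsiveTransition A M p d j‖ ≤ C := by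
  obtain ⟨CP, hCP0, hCP⟩ := Finite.exists_pos_forall_le fun q => ‖Pm q‖
  obtain ⟨CQ, hCQ0, hCQ⟩ := Finite.exists_pos_forall_le fun q => ‖(Pm q)⁻¹‖
  obtain ⟨CE, hCE0, hCE⟩ := exists_forall_norm_exp_smul_le_s9 hP hc hlam hmu hJs hJu ηI
  refine ⟨CP * CE * CQ, by positivity, fun j p d M hE hd hτ hη hM s hs hsη => ?_⟩
  have hstep : ∀ k < j, ‖(Pm (p (k + 1)))⁻¹ * (M (k + 1)).map (Complex.ofReal ·) * Pm (p k)‖ *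
      ‖exp ((d (k + 1) : ℂ) • J (p k))‖ ≤ 1 := by
    intro k hk
    have hd' := (hd (k + 1) k.succ_pos hk).le
    have hE' := hE (k + 1) k.succ_pos hk
    have hM' := hM (k + 1) k.succ_pos hk
    rcases hP (p k) with hst | hun
    · exact mul_le_one_of_log_div_le_of_le (norm_nonneg _) (hc _) (hlam _ hst)
        (hJs _ hst _ hd') (hτI_ub _ _ hE' hst _ hM') (hτ _ k.succ_pos hk hst)
    · exact mul_le_one_of_log_div_le_neg_of_le (norm_nonneg _) (hc _) (hmu _ hun)
        (hJu _ hun _ hd') (hηI_ub _ _ hE' hun _ hM') (hη _ k.succ_pos hk hun)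
  calc ‖exp (s • A (p j)) * impulsiveTransition A M p d j‖
      ≤ ‖Pm (p j) * exp ((s : ℂ) • J (p j)) * conjImpulsiveTransition A Pm M p d j *
          (Pm (p 0))⁻¹‖ := by
        rw [← map_ofReal_exp_smul_mul_impulsiveTransition M p d hPm hfact]
        exact Matrix.norm_le_norm_map_ofReal _
    _ ≤ ‖Pm (p j)‖ * ‖exp ((s : ℂ) • J (p j))‖ * ‖conjImpulsiveTransition A Pm M p d j‖ *
          ‖(Pm (p 0))⁻¹‖ := (norm_mul_le _ _).trans (by gcongr; exact norm_mul₃_le)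
    _ ≤ CP * CE * 1 * CQ := by
        gcongr
        exacts [hCP _, hCE _ s hs hsη, norm_conjImpulsiveTransition_le_one M p d hPm hfact hstep,
          hCQ _]
    _ = CP * CE * CQ := by ring

/-- Dwell time and flee time computed from Jordan-type factorizations `A_p = P_p J_p P_p⁻¹`
make the impulsive switched system governed by a graph `E`, with impulses in the nonempty
compact set `𝓘` of nonzero matrices, stable under arbitrary impulses: with
`τ_I = max{ ln(c_p ‖P_q⁻¹ M P_p‖)/λ_p : (p,q) ∈ E, p stable, M ∈ 𝓘 }` and
`η_I = −max{ ln(c_p ‖P_q⁻¹ M P_p‖)/μ_p : (p,q) ∈ E, p unstable, M ∈ 𝓘 }` (each maximum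
expressed as an upper bound that is attained), the system is stable for all `E`-admissible
signals with dwell time `τ_I` and flee time `η_I`. -/
theorem impulsive_system_stable_of_dwell_flee {n : ℕ} {P : Type*} [Fintype P]
    (A : P → Matrix (Fin n) (Fin n) ℝ)
    (hP : ∀ p, HurwitzStable (A p) ∨ HasUnstableEigenvalue (A p))
    (Pm J : P → Matrix (Fin n) (Fin n) ℂ)
    (hPm : ∀ p, IsUnit (Pm p))
    (hfact : ∀ p, (A p).map (Complex.ofReal ·) = Pm p * J p * (Pm p)⁻¹)
    (c lam mu : P → ℝ) (hc : ∀ p, 0 < c p)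
    (hlam : ∀ p, HurwitzStable (A p) → 0 < lam p)
    (hmu : ∀ p, HasUnstableEigenvalue (A p) → 0 < mu p)
    (hJs : ∀ p, HurwitzStable (A p) → ∀ t : ℝ, 0 ≤ t →
      ‖exp ((t : ℂ) • J p)‖ ≤ c p * Real.exp (-(lam p) * t))
    (hJu : ∀ p, HasUnstableEigenvalue (A p) → ∀ t : ℝ, 0 ≤ t →
      ‖exp ((t : ℂ) • J p)‖ ≤ c p * Real.exp (mu p * t))
    (E : P → P → Prop)
    (hEs : ∃ p q, E p q ∧ HurwitzStable (A p))
    (hEu : ∃ p q, E p q ∧ HasUnstableEigenvalue (A p))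
    (𝓘 : Set (Matrix (Fin n) (Fin n) ℝ)) (h𝓘ne : 𝓘.Nonempty) (h𝓘 : IsCompact 𝓘)
    (h𝓘0 : (0 : Matrix (Fin n) (Fin n) ℝ) ∉ 𝓘)
    (τI ηI : ℝ)
    (hτI_ub : ∀ p q, E p q → HurwitzStable (A p) → ∀ M ∈ 𝓘,
      Real.log (c p * ‖(Pm q)⁻¹ * M.map (Complex.ofReal ·) * Pm p‖) / lam p ≤ τI)
    (hτI_mem : ∃ p q, E p q ∧ HurwitzStable (A p) ∧ ∃ M ∈ 𝓘,
      τI = Real.log (c p * ‖(Pm q)⁻¹ * M.map (Complex.ofReal ·) * Pm p‖) / lam p)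
    (hηI_ub : ∀ p q, E p q → HasUnstableEigenvalue (A p) → ∀ M ∈ 𝓘,
      Real.log (c p * ‖(Pm q)⁻¹ * M.map (Complex.ofReal ·) * Pm p‖) / mu p ≤ -ηI)
    (hηI_mem : ∃ p q, E p q ∧ HasUnstableEigenvalue (A p) ∧ ∃ M ∈ 𝓘,
      -ηI = Real.log (c p * ‖(Pm q)⁻¹ * M.map (Complex.ofReal ·) * Pm p‖) / mu p) :
    ∃ C > (0 : ℝ), ∀ (j : ℕ) (p : ℕ → P) (d : ℕ → ℝ) (M : ℕ → Matrix (Fin n) (Fin n) ℝ),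
      (∀ k, 1 ≤ k → k ≤ j → E (p (k - 1)) (p k)) →
      (∀ k, 1 ≤ k → k ≤ j → 0 < d k) →
      (∀ k, 1 ≤ k → k ≤ j → HurwitzStable (A (p (k - 1))) → τI ≤ d k) →
      (∀ k, 1 ≤ k → k ≤ j → HasUnstableEigenvalue (A (p (k - 1))) → d k ≤ ηI) →
      (∀ k, 1 ≤ k → k ≤ j → M k ∈ 𝓘) →
      ∀ s : ℝ, 0 ≤ s → (HasUnstableEigenvalue (A (p j)) → s ≤ ηI) →
        ‖exp (s • A (p j)) * impulsiveTransition A M p d j‖ ≤ C :=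
  impulsive_system_stable_of_dwell_flee_general A hP Pm J hPm hfact c lam mu hc hlam hmu hJs hJu E 𝓘
    τI ηI hτI_ub hηI_ub
end
end

section
/- Let P be a finite index set, (A_p)_{p∈P} a family of n×n real matrices, and 𝓘 a compact set of n×n real matrices. Suppose that for some τ > 0 there exists a collection of symmetric positive definite matrices (Q_p)_{p∈P} such that Q_p·A_p + A_pᵀ·Q_p is negative definite for all p ∈ P, and exp(τ·A_q)ᵀ·Mᵀ·Q_p·M·exp(τ·A_q) ⪯ Q_q for all p, q ∈ P and all M ∈ 𝓘. Then there exists C > 0 such that for every j ≥ 0, every switching sequence p_0, …, p_j ∈ P, all durations d_1, …, d_j ≥ τ, every choice of impulses M_1, …, M_j ∈ 𝓘, and every s ≥ 0, one has ‖exp(s·A_{p_j})·Ψ_j‖ ≤ C; that is, the impulsive switched system is stable under arbitrary impulses for every switching signal with dwell time τ. -/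
/-! With `V_p(x) = xᵀ Q_p x`, the Lyapunov inequality makes `V_p` non-increasing along the flow
of `A_p`, and the LMI says `V_p(M exp(τ A_q) x) ≤ V_q(x)` for every impulse `M ∈ 𝓘`. Splitting
each duration `d_k ≥ τ` as `τ + (d_k - τ)` gives, for `X = exp(s A_{p_j}) Ψ_j`, the Loewner bound
`Xᵀ Q_{p_j} X ⪯ Q_{p_0}`. As the finitely many `Q_p` are uniformly positive definite and
bounded, this bounds `‖X‖` uniformly. -/

open Matrix NormedSpace
open scoped Matrix.Norms.L2Operator

noncomputable section

open scoped MatrixOrder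

namespace Matrix
variable {n : Type*} [Fintype n]

theorem PosDef.exists_pos_smul_one_le [DecidableEq n] {Q : Matrix n n ℝ} (hQ : Q.PosDef) :
    ∃ r > (0 : ℝ), r • (1 : Matrix n n ℝ) ≤ Q := by
  rcases subsingleton_or_nontrivial (Matrix n n ℝ) with _ | _
  · exact ⟨1, one_pos, le_of_subsingleton⟩
  simpa only [Algebra.algebraMap_eq_smul_one] using
    (CFC.exists_pos_algebraMap_le_iff hQ.isHermitian).2
      fun _ hx ↦ hQ.isStrictlyPositive.spectrum_pos hx

theorem transpose_mul_mul_le_transpose_mul_mul {B C : Matrix n n ℝ} (h : B ≤ C)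
    (X : Matrix n n ℝ) : Xᵀ * B * X ≤ Xᵀ * C * X := by
  have := star_left_conjugate_le_conjugate h X
  rwa [star_eq_conjTranspose, conjTranspose_eq_transpose_of_trivial] at this

theorem dotProduct_mulVec_le_dotProduct_mulVec {B C : Matrix n n ℝ} (h : B ≤ C) (x : n → ℝ) :
    x ⬝ᵥ B *ᵥ x ≤ x ⬝ᵥ C *ᵥ x := by
  have := (le_iff.mp h).dotProduct_mulVec_nonneg x
  rw [star_trivial, sub_mulVec, dotProduct_sub] at this
  linarith

variable [DecidableEq n]

theorem hasDerivAt_dotProduct_mulVec {F : ℝ → Matrix n n ℝ} {F' : Matrix n n ℝ} {u : ℝ}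
    (hF : HasDerivAt F F' u) (x : n → ℝ) :
    HasDerivAt (fun u ↦ x ⬝ᵥ F u *ᵥ x) (x ⬝ᵥ F' *ᵥ x) u :=
  (LinearMap.toContinuousLinearMap
    (dotProductBilin ℝ ℝ x ∘ₗ LinearMap.applyₗ x ∘ₗ toLin'.toLinearMap)).hasFDerivAt
    |>.comp_hasDerivAt u hF

theorem hasDerivAt_transpose_exp_smul_mul_mul_exp_smul (A Q : Matrix n n ℝ) (u : ℝ) :
    HasDerivAt (fun u : ℝ ↦ (exp (u • A))ᵀ * Q * exp (u • A))
      ((exp (u • A))ᵀ * (Q * A + Aᵀ * Q) * exp (u • A)) u := by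
  have hT : HasDerivAt (fun u : ℝ ↦ (exp (u • A))ᵀ) ((exp (u • A))ᵀ * Aᵀ) u := by
    simpa only [← transpose_smul, exp_transpose] using hasDerivAt_exp_smul_const Aᵀ u
  exact ((hT.mul_const Q).mul (hasDerivAt_exp_smul_const' A u)).congr_deriv (by noncomm_ring)

theorem transpose_exp_smul_mul_mul_exp_smul_le {A Q : Matrix n n ℝ} (hQ : Q.IsHermitian)
    (hQA : Q * A + Aᵀ * Q ≤ 0) {t : ℝ} (ht : 0 ≤ t) :
    (exp (t • A))ᵀ * Q * exp (t • A) ≤ Q := by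
  refine PosSemidef.of_dotProduct_mulVec_nonneg ?_ fun x ↦ ?_
  · simpa using hQ.sub (isHermitian_conjTranspose_mul_mul (exp (t • A)) hQ)
  have hderiv u :=
    hasDerivAt_dotProduct_mulVec (hasDerivAt_transpose_exp_smul_mul_mul_exp_smul A Q u) x
  have hanti : Antitone fun u : ℝ ↦ x ⬝ᵥ ((exp (u • A))ᵀ * Q * exp (u • A)) *ᵥ x :=
    antitone_of_deriv_nonpos (fun u ↦ (hderiv u).differentiableAt) fun u ↦ by
      rw [(hderiv u).deriv]
      simpa using dotProduct_mulVec_le_dotProduct_mulVec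
        (transpose_mul_mul_le_transpose_mul_mul hQA (exp (u • A))) x
  have := hanti ht
  simp only [zero_smul, exp_zero, transpose_one, one_mul, mul_one] at this
  rw [star_trivial, sub_mulVec, dotProduct_sub]
  linarith

theorem norm_toEuclideanCLM_apply_sq (X : Matrix n n ℝ) (v : EuclideanSpace ℝ n) :
    ‖toEuclideanCLM (𝕜 := ℝ) X v‖ ^ 2 = v.ofLp ⬝ᵥ (Xᵀ * X) *ᵥ v.ofLp := by
  rw [← real_inner_self_eq_norm_sq, ← ContinuousLinearMap.adjoint_inner_right,
    ← ContinuousLinearMap.star_eq_adjoint, ← map_star, ← mul_apply_eq_comp, ← map_mul,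
    inner_toEuclideanCLM, star_eq_conjTranspose, conjTranspose_eq_transpose_of_trivial]

open scoped RealInnerProductSpace in
theorem l2_opNorm_le_sqrt_of_smul_transpose_mul_self_le {X B : Matrix n n ℝ} {r : ℝ} (hr : 0 < r)
    (h : r • (Xᵀ * X) ≤ B) : ‖X‖ ≤ √(‖B‖ / r) := by
  refine (toEuclideanCLM (𝕜 := ℝ) X).opNorm_le_bound (Real.sqrt_nonneg _) fun v ↦ ?_
  have hquad : r * ‖toEuclideanCLM (𝕜 := ℝ) X v‖ ^ 2 ≤ ‖B‖ * ‖v‖ ^ 2 :=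
    calc r * ‖toEuclideanCLM (𝕜 := ℝ) X v‖ ^ 2 = v.ofLp ⬝ᵥ (r • (Xᵀ * X)) *ᵥ v.ofLp := by
          rw [norm_toEuclideanCLM_apply_sq, smul_mulVec, dotProduct_smul, smul_eq_mul]
      _ ≤ v.ofLp ⬝ᵥ B *ᵥ v.ofLp := dotProduct_mulVec_le_dotProduct_mulVec h _
      _ = ⟪v, toEuclideanCLM (𝕜 := ℝ) B v⟫ := (inner_toEuclideanCLM B v v).symm
      _ ≤ ‖v‖ * (‖B‖ * ‖v‖) :=
          (real_inner_le_norm _ _).trans (by gcongr; exact (toEuclideanCLM (𝕜 := ℝ) B).le_opNorm v)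
      _ = ‖B‖ * ‖v‖ ^ 2 := by ring
  rw [← Real.sqrt_sq (norm_nonneg v), ← Real.sqrt_mul (div_nonneg (norm_nonneg _) hr.le),
    Real.le_sqrt (norm_nonneg _) (by positivity), div_mul_eq_mul_div, le_div_iff₀ hr]
  linarith

end Matrix

theorem impulsiveTransition_lyapunov_le {n : ℕ} {P : Type*} {A : P → Matrix (Fin n) (Fin n) ℝ}
    {𝓘 : Set (Matrix (Fin n) (Fin n) ℝ)} {τ : ℝ} {V : P → Matrix (Fin n) (Fin n) ℝ}
    (hflow : ∀ p, ∀ s : ℝ, 0 ≤ s → (exp (s • A p))ᵀ * V p * exp (s • A p) ≤ V p)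
    (hjump : ∀ p q, ∀ M ∈ 𝓘, (exp (τ • A q))ᵀ * Mᵀ * V p * M * exp (τ • A q) ≤ V q)
    {j : ℕ} {p : ℕ → P} {d : ℕ → ℝ} {M : ℕ → Matrix (Fin n) (Fin n) ℝ}
    (hd : ∀ k, 1 ≤ k → k ≤ j → τ ≤ d k) (hM : ∀ k, 1 ≤ k → k ≤ j → M k ∈ 𝓘)
    {s : ℝ} (hs : 0 ≤ s) :
    (exp (s • A (p j)) * impulsiveTransition A M p d j)ᵀ * V (p j) *
      (exp (s • A (p j)) * impulsiveTransition A M p d j) ≤ V (p 0) := by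
  induction j generalizing s with
  | zero => simpa [impulsiveTransition] using hflow (p 0) s hs
  | succ j ih =>
    have hdj : τ ≤ d (j + 1) := hd (j + 1) (by omega) le_rfl
    set Es := exp (s • A (p (j + 1)))
    set N := M (j + 1) * exp (τ • A (p j))
    set Y := exp ((d (j + 1) - τ) • A (p j)) * impulsiveTransition A M p d j
    have hsplit :
        exp (d (j + 1) • A (p j)) = exp (τ • A (p j)) * exp ((d (j + 1) - τ) • A (p j)) := by
      rw [← Matrix.exp_add_of_commute _ _ (((Commute.refl _).smul_left _).smul_right _),
        ← add_smul, add_sub_cancel]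
    calc (Es * impulsiveTransition A M p d (j + 1))ᵀ * V (p (j + 1)) *
          (Es * impulsiveTransition A M p d (j + 1))
        = Yᵀ * (Nᵀ * (Esᵀ * V (p (j + 1)) * Es) * N) * Y := by
          simp only [impulsiveTransition, hsplit, Es, N, Y, transpose_mul, Matrix.mul_assoc]
      _ ≤ Yᵀ * (Nᵀ * V (p (j + 1)) * N) * Y :=
          transpose_mul_mul_le_transpose_mul_mul
            (transpose_mul_mul_le_transpose_mul_mul (hflow _ s hs) N) Y
      _ ≤ Yᵀ * V (p j) * Y := by
          refine transpose_mul_mul_le_transpose_mul_mul ?_ Y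
          simpa only [N, transpose_mul, Matrix.mul_assoc] using
            hjump (p (j + 1)) (p j) (M (j + 1)) (hM (j + 1) (by omega) le_rfl)
      _ ≤ V (p 0) := ih (fun k h1 h2 ↦ hd k h1 (by omega)) (fun k h1 h2 ↦ hM k h1 (by omega))
          (by linarith)

theorem impulsive_system_stable_of_MLF_dwell_general {n : ℕ} {P : Type*} [Fintype P]
    (A : P → Matrix (Fin n) (Fin n) ℝ)
    (𝓘 : Set (Matrix (Fin n) (Fin n) ℝ))
    (τ : ℝ)
    (Q : P → Matrix (Fin n) (Fin n) ℝ)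
    (hQ : ∀ p, (Q p).PosDef)
    (hQA : ∀ p, (-(Q p * A p + (A p)ᵀ * Q p)).PosDef)
    (hLMI : ∀ p q, ∀ M ∈ 𝓘, (Q q -
      (exp (τ • A q))ᵀ * Mᵀ * Q p * M * exp (τ • A q)).PosSemidef) :
    ∃ C > (0 : ℝ), ∀ (j : ℕ) (p : ℕ → P) (d : ℕ → ℝ) (M : ℕ → Matrix (Fin n) (Fin n) ℝ),
      (∀ k, 1 ≤ k → k ≤ j → τ ≤ d k) →
      (∀ k, 1 ≤ k → k ≤ j → M k ∈ 𝓘) →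
      ∀ s : ℝ, 0 ≤ s →
        ‖exp (s • A (p j)) * impulsiveTransition A M p d j‖ ≤ C := by
  have hflow p s (hs : 0 ≤ s) : (exp (s • A p))ᵀ * Q p * exp (s • A p) ≤ Q p :=
    transpose_exp_smul_mul_mul_exp_smul_le (hQ p).isHermitian
      (by rw [le_iff, zero_sub]; exact (hQA p).posSemidef) hs
  choose r hr hrQ using fun p ↦ (hQ p).exists_pos_smul_one_le
  obtain ⟨C, hC⟩ := (Set.finite_range fun pq : P × P ↦ √(‖Q pq.2‖ / r pq.1)).bddAbove
  refine ⟨max C 1, by positivity, fun j p d M hd hM s hs ↦ ?_⟩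
  set X := exp (s • A (p j)) * impulsiveTransition A M p d j
  have hX : r (p j) • (Xᵀ * X) ≤ Q (p 0) :=
    calc r (p j) • (Xᵀ * X) = Xᵀ * (r (p j) • 1) * X := by simp
      _ ≤ Xᵀ * Q (p j) * X := transpose_mul_mul_le_transpose_mul_mul (hrQ (p j)) X
      _ ≤ Q (p 0) := impulsiveTransition_lyapunov_le hflow hLMI hd hM hs
  calc ‖X‖ ≤ √(‖Q (p 0)‖ / r (p j)) :=
        l2_opNorm_le_sqrt_of_smul_transpose_mul_self_le (hr _) hX
    _ ≤ C := hC ⟨(p j, p 0), rfl⟩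
    _ ≤ max C 1 := le_max_left C 1

/-- Multiple-Lyapunov-function dwell time criterion for impulsive switched systems with a
compact set `𝓘` of impulses: if there are symmetric positive definite `Q_p` with
`Q_p A_p + A_pᵀ Q_p` negative definite and
`exp(τ A_q)ᵀ Mᵀ Q_p M exp(τ A_q) ⪯ Q_q` for all `p, q` and `M ∈ 𝓘`, then the impulsive
switched system is stable under arbitrary impulses for every switching signal with dwell
time `τ`. -/
theorem impulsive_system_stable_of_MLF_dwell {n : ℕ} {P : Type*} [Fintype P]
    (A : P → Matrix (Fin n) (Fin n) ℝ)
    (𝓘 : Set (Matrix (Fin n) (Fin n) ℝ)) (h𝓘 : IsCompact 𝓘)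
    (τ : ℝ) (hτ : 0 < τ)
    (Q : P → Matrix (Fin n) (Fin n) ℝ)
    (hQ : ∀ p, (Q p).PosDef)
    (hQA : ∀ p, (-(Q p * A p + (A p)ᵀ * Q p)).PosDef)
    (hLMI : ∀ p q, ∀ M ∈ 𝓘, (Q q -
      (exp (τ • A q))ᵀ * Mᵀ * Q p * M * exp (τ • A q)).PosSemidef) :
    ∃ C > (0 : ℝ), ∀ (j : ℕ) (p : ℕ → P) (d : ℕ → ℝ) (M : ℕ → Matrix (Fin n) (Fin n) ℝ),
      (∀ k, 1 ≤ k → k ≤ j → τ ≤ d k) →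
      (∀ k, 1 ≤ k → k ≤ j → M k ∈ 𝓘) →
      ∀ s : ℝ, 0 ≤ s →
        ‖exp (s • A (p j)) * impulsiveTransition A M p d j‖ ≤ C :=
  impulsive_system_stable_of_MLF_dwell_general A 𝓘 τ Q hQ hQA hLMI
end
end
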